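/- Let G be a finitely generated group in which every conjugacy class is finite. Then the center of G has finite index in G; in particular, G is abelian-by-finite. -/

import Mathlib

/-!
The center is the intersection of the centralizers of finitely many generators, and by the
orbit-stabilizer theorem for the conjugation action the index of the centralizer of `g` is the
size of the conjugacy class of `g`.
-/

open Subgroup

theorem index_centralizer_singleton {G : Type*} [Group G] (g : G) :
    (centralizer {g}).index = (ConjClasses.mk g).carrier.ncard := by
  rw [← ConjAct.orbit_eq_carrier_conjClasses, ← MulAction.index_stabilizer,
    ConjAct.stabilizer_eq_centralizer]
  rfl

theorem finiteIndex_centralizer_singleton {G : Type*} [Group G] {g : G}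
    (hg : (ConjClasses.mk g).carrier.Finite) : (centralizer {g}).FiniteIndex := by
  constructor
  rw [index_centralizer_singleton]
  exact ((Set.ncard_pos hg).mpr ⟨g, ConjClasses.mem_carrier_mk⟩).ne'

theorem finiteIndex_center_of_closure_eq_top {G : Type*} [Group G] {s : Finset G}
    (hs : closure (s : Set G) = ⊤) (hfc : ∀ g ∈ s, (ConjClasses.mk g).carrier.Finite) :
    (center G).FiniteIndex := by
  rw [center_eq_iInf hs]
  exact finiteIndex_iInf' _ fun g hg => finiteIndex_centralizer_singleton (hfc g hg)

/-- A finitely generated group in which every conjugacy class is finite has center of finite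
index; in particular it is abelian-by-finite. -/
theorem center_finiteIndex_of_fg_fc {G : Type*} [Group G] (hfg : Group.FG G)
    (hfc : ∀ g : G, Set.Finite {x : G | ∃ h : G, x = h * g * h⁻¹}) :
    (Subgroup.center G).FiniteIndex ∧
      ∃ A : Subgroup G, A.FiniteIndex ∧ ∀ a ∈ A, ∀ b ∈ A, a * b = b * a := by
  obtain ⟨s, hs⟩ := hfg.out
  have hconj (g : G) : {x : G | ∃ h : G, x = h * g * h⁻¹} = (ConjClasses.mk g).carrier := by
    ext x
    simp [ConjClasses.mem_carrier_iff_mk_eq, ConjClasses.mk_eq_mk_iff_isConj, isConj_iff, eq_comm]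
  have hcenter := finiteIndex_center_of_closure_eq_top hs fun g _ => hconj g ▸ hfc g
  exact ⟨hcenter, center G, hcenter, fun a ha b _ => (mem_center_iff.mp ha b).symm⟩
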